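/- Let d ≥ 1 and let μ_1, …, μ_d be the d (distinct, real) roots of the physicists' Hermite polynomial H_d^{ph}(X). Then ∏_{1 ≤ j < k ≤ d} (μ_j − μ_k)² = 2^{−d(d−1)/2} · ∏_{ν=1}^{d} ν^{ν}. -/

import Mathlib

/-- The physicists' Hermite polynomial
`H_d^{ph}(X) = ∑_{k ≤ d/2} (-1)^k d!/(k!(d-2k)!) (2X)^(d-2k)`,
normalized by the generating function `e^{2Xt - t²} = ∑ H_d^{ph}(X) t^d/d!`. -/
noncomputable def hermitePh (d : ℕ) : Polynomial ℝ :=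
  ∑ k ∈ Finset.range (d / 2 + 1),
    Polynomial.C ((-1 : ℝ) ^ k * (d.factorial : ℝ) /
      ((k.factorial : ℝ) * ((d - 2 * k).factorial : ℝ))) *
      (2 * Polynomial.X) ^ (d - 2 * k)

/-!
Write `H_d` for `hermitePh d`. From the explicit formula, `H_{d+1}' = 2(d+1) H_d` and
`H_{d+2} = 2X H_{d+1} - 2(d+1) H_d`. The second relation is a Euclidean step for resultants,
so `Res(H_{n+1}, H_n) = ∏_{j ≤ n} (-8j)^j`, and the first gives
`Res(H_d, H_d') = (2d)^d Res(H_d, H_{d-1})`. On the other hand, for a polynomial `f` of degree `d`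
with leading coefficient `c` and distinct roots `μ_a`,
`Res(f, f') = c^(d-1) ∏_a f'(μ_a) = (-1)^(d(d-1)/2) c^(2d-1) ∏_{a<b} (μ_a - μ_b)^2`.
Comparing the two values of `Res(H_d, H_d')` gives the product.
-/

open Polynomial Finset

namespace Finset

variable {M ι : Type*} [CommMonoid M]

theorem prod_prod_erase_eq_prod_offDiag [DecidableEq ι] (s : Finset ι) (f : ι → ι → M) :
    ∏ a ∈ s, ∏ b ∈ s.erase a, f a b = ∏ q ∈ s.offDiag, f q.1 q.2 := by
  have hs : s.offDiag = (s ×ˢ s).filter (fun q => q.1 ≠ q.2) := by ext; simp [and_assoc]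
  rw [hs, prod_filter, prod_product]
  refine prod_congr rfl fun a _ => ?_
  rw [← prod_filter, filter_ne]

variable [LinearOrder ι]

theorem prod_offDiag_eq_prod_filter_lt (s : Finset ι) (g : ι × ι → M) :
    ∏ q ∈ s.offDiag, g q = ∏ q ∈ s.offDiag.filter (fun q => q.1 < q.2), g q * g q.swap := by
  rw [← prod_filter_mul_prod_filter_not s.offDiag (fun q => q.1 < q.2), prod_mul_distrib]
  congr 1
  refine (prod_equiv (Equiv.prodComm ι ι) (fun q => ?_) (fun _ _ => rfl)).symm
  simp only [mem_filter, mem_offDiag, Equiv.prodComm_apply, Prod.fst_swap, Prod.snd_swap]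
  grind

theorem card_offDiag_filter_lt (s : Finset ι) :
    (s.offDiag.filter (fun q => q.1 < q.2)).card = s.card.choose 2 := by
  rw [← card_product_filter_lt]
  congr 1
  ext q
  simp only [mem_filter, mem_offDiag, mem_product]
  grind

theorem prod_prod_erase_sub {R : Type*} [CommRing R] [Fintype ι] (μ : ι → R) :
    ∏ a, ∏ b ∈ univ.erase a, (μ a - μ b) =
      (-1) ^ (Fintype.card ι).choose 2 *
        ∏ q ∈ (univ : Finset ι).offDiag.filter (fun q => q.1 < q.2),
          (μ q.1 - μ q.2) ^ 2 := by
  rw [prod_prod_erase_eq_prod_offDiag univ (fun a b => μ a - μ b),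
    prod_offDiag_eq_prod_filter_lt, ← card_univ, ← card_offDiag_filter_lt, ← prod_const,
    ← prod_mul_distrib]
  refine prod_congr rfl fun q _ => ?_
  simp only [Prod.fst_swap, Prod.snd_swap]
  ring

end Finset

namespace Polynomial

variable {K : Type*} [Field K] {n : ℕ} {f : K[X]}

theorem roots_eq_map_of_injective {μ : Fin n → K} (hf : f ≠ 0) (hμ : Function.Injective μ)
    (hroot : ∀ a, f.eval (μ a) = 0) (hdeg : f.natDegree ≤ n) :
    f.roots = univ.val.map μ := by
  simpa using roots_eq_of_natDegree_le_card_of_ne_zero (S := univ.map ⟨μ, hμ⟩)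
    (by simpa using hroot) (by simpa using hdeg) hf

theorem eval_derivative_of_roots_eq {μ : Fin n → K} (hμ : Function.Injective μ)
    (hroots : f.roots = univ.val.map μ) (hdeg : f.natDegree = n) (a : Fin n) :
    (derivative f).eval (μ a) = f.leadingCoeff * ∏ b ∈ univ.erase a, (μ a - μ b) := by
  classical
  have hsplit : f = C f.leadingCoeff * (f.roots.map fun r => X - C r).prod :=
    (C_leadingCoeff_mul_prod_multiset_X_sub_C (by simp [hroots, hdeg])).symm
  have hmem : μ a ∈ f.roots := by simp [hroots]
  conv_lhs => rw [hsplit]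
  rw [derivative_C_mul, eval_mul, eval_C, eval_multiset_prod_X_sub_C_derivative hmem,
    hroots, ← Multiset.map_erase μ hμ, Multiset.map_map, ← erase_val]
  rfl

theorem resultant_derivative_eq_prod_sq {μ : Fin (n + 1) → K} (hμ : Function.Injective μ)
    (hroot : ∀ a, f.eval (μ a) = 0) (hdeg : f.natDegree = n + 1) :
    resultant f (derivative f) (n + 1) n =
      (-1) ^ (n + 1).choose 2 * f.leadingCoeff ^ (2 * n + 1) *
        ∏ q ∈ (univ : Finset (Fin (n + 1))).offDiag.filter (fun q => q.1 < q.2),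
          (μ q.1 - μ q.2) ^ 2 := by
  have hf : f ≠ 0 := by rintro rfl; simp at hdeg
  have hroots := roots_eq_map_of_injective hf hμ hroot hdeg.le
  have hsplits : f.Splits := splits_iff_card_roots.mpr (by simp [hroots, hdeg])
  have hres := resultant_eq_prod_eval f (derivative f) n
    ((natDegree_derivative_le f).trans (by omega)) hsplits
  rw [hdeg] at hres
  rw [hres, hroots, Multiset.map_map, ← prod_eq_multiset_prod]
  simp only [Function.comp_apply, eval_derivative_of_roots_eq hμ hroots hdeg]
  rw [prod_mul_distrib, prod_const, card_univ, Fintype.card_fin, prod_prod_erase_sub,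
    Fintype.card_fin]
  ring

theorem derivative_C_mul_two_X_pow {R : Type*} [CommSemiring R] (c : R) (m : ℕ) :
    derivative (C c * (2 * X) ^ m) = C (2 * m * c) * (2 * X) ^ (m - 1) := by
  rw [derivative_C_mul, derivative_pow, derivative_mul, derivative_X, derivative_ofNat]
  simp only [zero_mul, zero_add, mul_one, map_mul, map_natCast, map_ofNat]
  ring

end Polynomial

/-- The coefficient `(-1)^k d! / (k! (d - 2k)!)` of `hermitePh`, written with `Nat.choose` so that
it vanishes for `2k > d`. -/
noncomputable def hermitePhCoeff (d k : ℕ) : ℝ :=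
  (-1) ^ k * d.choose (2 * k) * (2 * k).factorial / k.factorial

theorem hermitePhCoeff_zero_right (d : ℕ) : hermitePhCoeff d 0 = 1 := by
  simp [hermitePhCoeff]

theorem hermitePhCoeff_succ_mul (d k : ℕ) :
    hermitePhCoeff (d + 1) k * (d + 1 - 2 * k : ℕ) = (d + 1) * hermitePhCoeff d k := by
  have h : ((d + 1).choose (2 * k) : ℝ) * (d + 1 - 2 * k : ℕ) = d.choose (2 * k) * (d + 1) := by
    exact_mod_cast (Nat.choose_mul_succ_eq d (2 * k)).symm
  rw [hermitePhCoeff, hermitePhCoeff]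
  field_simp
  linear_combination h

theorem hermitePhCoeff_add_two (n k : ℕ) :
    hermitePhCoeff (n + 2) (k + 1) =
      hermitePhCoeff (n + 1) (k + 1) - 2 * (n + 1) * hermitePhCoeff n k := by
  have hpascal : ((n + 2).choose (2 * k + 2) : ℝ) =
      (n + 1).choose (2 * k + 1) + (n + 1).choose (2 * k + 2) := by
    exact_mod_cast Nat.choose_succ_succ' (n + 1) (2 * k + 1)
  have habsorb : ((n + 1 : ℕ) : ℝ) * n.choose (2 * k) =
      (n + 1).choose (2 * k + 1) * (2 * k + 1 : ℕ) := by
    exact_mod_cast Nat.add_one_mul_choose_eq n (2 * k)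
  simp only [hermitePhCoeff, show 2 * (k + 1) = 2 * k + 2 by ring, Nat.factorial_succ, pow_succ]
  push_cast at habsorb ⊢
  rw [hpascal]
  field_simp
  linear_combination (2 * k + 2) * habsorb

theorem hermitePh_eq_sum {d N : ℕ} (hN : d / 2 < N) :
    hermitePh d = ∑ k ∈ range N, C (hermitePhCoeff d k) * (2 * X) ^ (d - 2 * k) := by
  rw [hermitePh]
  refine (sum_congr rfl fun k hk => ?_).trans
    (sum_subset (by intro k; simp only [mem_range]; omega) (fun k _ hk => ?_))
  · have h : d.choose (2 * k) * (2 * k).factorial * (d - 2 * k).factorial = d.factorial :=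
      Nat.choose_mul_factorial_mul_factorial (by simp at hk; omega)
    rw [hermitePhCoeff, ← h]
    push_cast
    field_simp
  · rw [hermitePhCoeff, Nat.choose_eq_zero_of_lt (by simp at hk; omega)]
    simp

theorem hermitePh_zero : hermitePh 0 = 1 := by simp [hermitePh]

theorem derivative_hermitePh_succ (d : ℕ) :
    derivative (hermitePh (d + 1)) = C (2 * ((d : ℝ) + 1)) * hermitePh d := by
  rw [hermitePh_eq_sum (N := d + 1) (by omega), hermitePh_eq_sum (N := d + 1) (by omega),
    derivative_sum, mul_sum]
  refine sum_congr rfl fun k _ => ?_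
  rw [derivative_C_mul_two_X_pow, ← mul_assoc, ← C_mul, Nat.sub_right_comm, Nat.add_sub_cancel,
    mul_assoc, mul_comm _ (hermitePhCoeff _ _), hermitePhCoeff_succ_mul]
  ring_nf

theorem hermitePh_add_two (n : ℕ) :
    hermitePh (n + 2) = 2 * X * hermitePh (n + 1) - C (2 * ((n : ℝ) + 1)) * hermitePh n := by
  have hterm (k : ℕ) : C (hermitePhCoeff (n + 2) (k + 1)) * (2 * X) ^ (n + 2 - 2 * (k + 1)) =
      2 * X * (C (hermitePhCoeff (n + 1) (k + 1)) * (2 * X) ^ (n + 1 - 2 * (k + 1))) -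
        C (2 * ((n : ℝ) + 1)) * (C (hermitePhCoeff n k) * (2 * X) ^ (n - 2 * k)) := by
    rw [hermitePhCoeff_add_two, show n + 2 - 2 * (k + 1) = n - 2 * k by omega, map_sub, map_mul]
    rcases lt_or_ge n (2 * k + 1) with h | h
    · have hzero : hermitePhCoeff (n + 1) (k + 1) = 0 := by
        simp [hermitePhCoeff, Nat.choose_eq_zero_of_lt (show n + 1 < 2 * (k + 1) by omega)]
      simp only [hzero, map_zero]
      ring
    · rw [show n - 2 * k = (n + 1 - 2 * (k + 1)) + 1 by omega]
      ring
  rw [hermitePh_eq_sum (N := n + 2) (by omega), hermitePh_eq_sum (N := n + 2) (by omega),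
    hermitePh_eq_sum (N := n + 1) (by omega), sum_range_succ', sum_range_succ' _ (n + 1),
    sum_congr rfl fun k _ => hterm k, sum_sub_distrib, ← mul_sum, ← mul_sum]
  simp only [hermitePhCoeff_zero_right, map_one, one_mul, Nat.sub_zero, mul_zero]
  ring

theorem natDegree_hermitePh_le (d : ℕ) : (hermitePh d).natDegree ≤ d := by
  rw [hermitePh_eq_sum (N := d + 1) (by omega)]
  refine natDegree_sum_le_of_forall_le _ _ fun k _ => ?_
  rw [mul_pow, ← C_ofNat, ← C_pow, ← mul_assoc, ← C_mul]
  exact (natDegree_C_mul_X_pow_le _ _).trans (by omega)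

theorem coeff_hermitePh_self (d : ℕ) : (hermitePh d).coeff d = 2 ^ d := by
  induction d with
  | zero => simp [hermitePh_zero]
  | succ d ih =>
    have h := congrArg (coeff · d) (derivative_hermitePh_succ d)
    simp only [coeff_derivative, coeff_C_mul, ih] at h
    rw [pow_succ]
    field_simp at h
    linear_combination h

theorem natDegree_hermitePh (d : ℕ) : (hermitePh d).natDegree = d :=
  (natDegree_hermitePh_le d).antisymm
    (le_natDegree_of_ne_zero (by rw [coeff_hermitePh_self]; positivity))

theorem leadingCoeff_hermitePh (d : ℕ) : (hermitePh d).leadingCoeff = 2 ^ d := by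
  rw [leadingCoeff, natDegree_hermitePh, coeff_hermitePh_self]

theorem resultant_hermitePh_add_two (n : ℕ) :
    resultant (hermitePh (n + 2)) (hermitePh (n + 1)) (n + 2) (n + 1) =
      (-8 * ((n : ℝ) + 1)) ^ (n + 1) * resultant (hermitePh (n + 1)) (hermitePh n) (n + 1) n := by
  set c : ℝ := -(2 * ((n : ℝ) + 1))
  have hrec : hermitePh (n + 2) = C c * hermitePh n + hermitePh (n + 1) * (2 * X) := by
    rw [hermitePh_add_two, map_neg]
    ring
  have h2X : (2 * X : ℝ[X]).natDegree + (n + 1) ≤ n + 2 := by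
    have : (2 * X : ℝ[X]).natDegree ≤ 1 := by compute_degree
    omega
  calc resultant (hermitePh (n + 2)) (hermitePh (n + 1)) (n + 2) (n + 1)
      = c ^ (n + 1) * resultant (hermitePh n) (hermitePh (n + 1)) (n + 2) (n + 1) := by
        rw [hrec, resultant_add_mul_left _ _ _ _ _ h2X (natDegree_hermitePh_le _),
          resultant_C_mul_left]
    _ = c ^ (n + 1) * (2 ^ (n + 1)) ^ 2 *
          resultant (hermitePh n) (hermitePh (n + 1)) n (n + 1) := by
        rw [resultant_add_left_deg _ _ _ _ 2 (natDegree_hermitePh_le _), coeff_hermitePh_self,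
          Even.neg_one_pow ⟨n + 1, by ring⟩]
        ring
    _ = _ := by
        rw [resultant_comm, (Nat.even_mul_succ_self n).neg_one_pow, ← pow_mul,
          show (-8 * ((n : ℝ) + 1)) = c * 2 ^ 2 by ring, mul_pow, ← pow_mul]
        ring

theorem resultant_hermitePh_succ (n : ℕ) :
    resultant (hermitePh (n + 1)) (hermitePh n) (n + 1) n =
      (-8) ^ (n + 1).choose 2 * ∏ j ∈ Icc 1 n, (j : ℝ) ^ j := by
  induction n with
  | zero => simp [hermitePh_zero]
  | succ n ih =>
    rw [resultant_hermitePh_add_two, ih, Nat.choose_succ_succ' (n + 1) 1, Nat.choose_one_right,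
      prod_Icc_succ_top (by omega), mul_pow]
    push_cast
    ring

theorem hermite_discriminant_product_general (d : ℕ) (mu : Fin d → ℝ)
    (hinj : Function.Injective mu)
    (hroot : ∀ a : Fin d, (hermitePh d).eval (mu a) = 0) :
    ∏ q ∈ (Finset.univ : Finset (Fin d)).offDiag.filter (fun q => q.1 < q.2),
        (mu q.1 - mu q.2) ^ 2 =
      (∏ ν ∈ Finset.Icc 1 d, (ν : ℝ) ^ ν) / 2 ^ (d * (d - 1) / 2) := by
  cases d with
  | zero => simp
  | succ e =>
    have hres := resultant_derivative_eq_prod_sq hinj hroot (natDegree_hermitePh (e + 1))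
    rw [derivative_hermitePh_succ, resultant_C_mul_right, resultant_hermitePh_succ,
      leadingCoeff_hermitePh] at hres
    set S := (e + 1).choose 2
    have hS : S * 2 = (e + 1) * e := by rw [← Nat.add_one_mul_choose_eq, Nat.choose_one_right]
    have hexp : (e + 1) * (2 * e + 1) = (e + 1) + 4 * S := by
      rw [show 4 * S = 2 * (S * 2) by ring, hS]; ring
    rw [← pow_mul, hexp, show (-8 : ℝ) = -1 * 2 ^ 3 by norm_num, mul_pow, mul_pow, ← pow_mul]
      at hres
    rw [prod_Icc_succ_top (by omega), ← Nat.choose_two_right, eq_div_iff (by positivity)]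
    refine mul_left_cancel₀ (by simp : (-1 : ℝ) ^ S * 2 ^ (e + 1) * 2 ^ (3 * S) ≠ 0) ?_
    push_cast at hres ⊢
    linear_combination -hres

theorem hermite_discriminant_product (d : ℕ) (hd : 1 ≤ d) (mu : Fin d → ℝ)
    (hinj : Function.Injective mu)
    (hroot : ∀ a : Fin d, (hermitePh d).eval (mu a) = 0) :
    ∏ q ∈ (Finset.univ : Finset (Fin d)).offDiag.filter (fun q => q.1 < q.2),
        (mu q.1 - mu q.2) ^ 2 =
      (∏ ν ∈ Finset.Icc 1 d, (ν : ℝ) ^ ν) / 2 ^ (d * (d - 1) / 2) :=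
  hermite_discriminant_product_general d mu hinj hroot
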